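/- The filter system $\{\phi^d\}\cup\{\psi^d_{j,k}\}$ (all translates) forms a frame for $\ell^2(\mathbb{Z}^2)$ with frame bounds $A=\min_{\xi}\hat\Psi^d(\xi)$ and $B=\max_{\xi}\hat\Psi^d(\xi)$: for all $f\in\ell^2(\mathbb{Z}^2)$, $A\|f\|_2^2 \le \|f*\overline{\phi^d}\|_2^2 + \sum_{j,k}\|f*\overline{\psi^d_{j,k}}\|_2^2 \le B\|f\|_2^2$, where $\hat\Psi^d(\xi)=|\hat\phi^d(\xi)|^2+\sum_{j,k}|\hat\psi^d_{j,k}(\xi)|^2$. -/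

import Mathlib

/-! Parseval's identity on the unit square, together with the fact that correlating `f` with a
filter `g` multiplies `f̂` by `conj ĝ`, gives `∑ᵢ ‖f * \overline{gᵢ}‖² = ∫ |f̂|² Ψ̂` for finitely
supported `f`; this lies between `A ‖f‖²` and `B ‖f‖²` because `A ≤ Ψ̂ ≤ B` pointwise. Correlation
with a finitely supported filter is a finite combination of shifts, hence continuous on `ℓ²`, so
both inequalities extend from the dense set of finitely supported sequences to all of `ℓ²`. -/

open MeasureTheory Set Function
open scoped Real ComplexConjugate ENNReal lp

noncomputable section

namespace lp

variable {α E : Type*} [NormedAddCommGroup E]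

lemma norm_sq_eq_tsum (F : lp (fun _ : α => E) 2) : ‖F‖ ^ 2 = ∑' i, ‖F i‖ ^ 2 := by
  simpa using lp.norm_rpow_eq_tsum (p := 2) (by norm_num) F

lemma dense_setOf_finite_support {p : ℝ≥0∞} [Fact (1 ≤ p)] (hp : p ≠ ⊤) :
    Dense {F : lp (fun _ : α => E) p | (support ⇑F).Finite} := by
  classical
  refine fun F => mem_closure_of_tendsto (lp.hasSum_single hp F) (Filter.Eventually.of_forall
    fun t => t.finite_toSet.subset fun i hi => ?_)
  by_contra hit
  simp only [lp.coeFn_sum, lp.coeFn_single, mem_support, Finset.sum_apply,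
    Finset.sum_pi_single] at hi
  exact hi (if_neg hit)

end lp

namespace FilterBank

lemma integral_exp_neg_two_pi_int_mul (k : ℤ) :
    ∫ t in Icc (0 : ℝ) 1, Complex.exp (-2 * π * Complex.I * (k * t)) = if k = 0 then 1 else 0 := by
  rw [integral_Icc_eq_integral_Ioc, ← intervalIntegral.integral_of_le zero_le_one]
  split_ifs with hk
  · simp [hk]
  · have hc : -2 * π * Complex.I * k ≠ 0 := by simp [Real.pi_ne_zero, hk]
    simp_rw [← mul_assoc]
    rw [integral_exp_mul_complex hc]
    have hperiod : Complex.exp (-2 * π * Complex.I * k * (1 : ℝ)) = 1 := by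
      convert Complex.exp_int_mul_two_pi_mul_I (-k) using 2
      push_cast; ring
    rw [hperiod]
    simp

def expChar (n : ℤ × ℤ) (ξ : ℝ × ℝ) : ℂ :=
  Complex.exp (-2 * (π : ℂ) * Complex.I * ((n.1 : ℂ) * (ξ.1 : ℂ) + (n.2 : ℂ) * (ξ.2 : ℂ)))

lemma expChar_add (a b : ℤ × ℤ) (ξ : ℝ × ℝ) :
    expChar (a + b) ξ = expChar a ξ * expChar b ξ := by
  rw [expChar, expChar, expChar, ← Complex.exp_add, Prod.fst_add, Prod.snd_add]
  push_cast
  ring_nf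

lemma conj_expChar (n : ℤ × ℤ) (ξ : ℝ × ℝ) : conj (expChar n ξ) = expChar (-n) ξ := by
  rw [expChar, expChar, ← Complex.exp_conj]
  simp only [map_mul, map_add, map_neg, map_ofNat, Complex.conj_ofReal, Complex.conj_I,
    map_intCast, Prod.fst_neg, Prod.snd_neg]
  push_cast
  ring_nf

@[fun_prop]
lemma continuous_expChar (n : ℤ × ℤ) : Continuous (expChar n) := by
  unfold expChar
  fun_prop

lemma integral_expChar (n : ℤ × ℤ) :
    ∫ ξ in Icc 0 1, expChar n ξ = if n = 0 then 1 else 0 := by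
  have hsplit : ∀ ξ : ℝ × ℝ, expChar n ξ = Complex.exp (-2 * π * Complex.I * (n.1 * ξ.1)) *
      Complex.exp (-2 * π * Complex.I * (n.2 * ξ.2)) := fun ξ => by
    rw [expChar, ← Complex.exp_add]; ring_nf
  rw [← Prod.mk_zero_zero, ← Prod.mk_one_one, ← Icc_prod_Icc, Measure.volume_eq_prod,
    ← Measure.prod_restrict]
  simp_rw [hsplit]
  rw [integral_prod_mul (fun x : ℝ => Complex.exp (-2 * π * Complex.I * (n.1 * x)))
    (fun y : ℝ => Complex.exp (-2 * π * Complex.I * (n.2 * y))),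
    integral_exp_neg_two_pi_int_mul, integral_exp_neg_two_pi_int_mul]
  obtain ⟨n₁, n₂⟩ := n
  by_cases h₁ : n₁ = 0 <;> by_cases h₂ : n₂ = 0 <;> simp [h₁, h₂]

def fourierSum (c : ℤ × ℤ → ℂ) (ξ : ℝ × ℝ) : ℂ := ∑' n, c n * expChar n ξ

lemma fourierSum_eq_sum {c : ℤ × ℤ → ℂ} {s : Finset (ℤ × ℤ)} (hs : support c ⊆ s)
    (ξ : ℝ × ℝ) : fourierSum c ξ = ∑ n ∈ s, c n * expChar n ξ :=
  tsum_eq_sum fun n hn => by rw [notMem_support.mp fun h => hn (hs h), zero_mul]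

lemma continuous_fourierSum {c : ℤ × ℤ → ℂ} (hc : (support c).Finite) :
    Continuous (fourierSum c) := by
  rw [funext (fourierSum_eq_sum hc.coe_toFinset.ge)]
  fun_prop

lemma integral_norm_sq_fourierSum {c : ℤ × ℤ → ℂ} (hc : (support c).Finite) :
    ∫ ξ in Icc 0 1, ‖fourierSum c ξ‖ ^ 2 = ∑' n, ‖c n‖ ^ 2 := by
  classical
  set s := hc.toFinset
  have hs : support c ⊆ s := hc.coe_toFinset.ge
  have hexpand : ∀ ξ, ((‖fourierSum c ξ‖ : ℂ)) ^ 2 =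
      ∑ n ∈ s, ∑ m ∈ s, c n * conj (c m) * expChar (n - m) ξ := fun ξ => by
    rw [← Complex.mul_conj', fourierSum_eq_sum hs, map_sum, Finset.sum_mul_sum]
    refine Finset.sum_congr rfl fun n _ => Finset.sum_congr rfl fun m _ => ?_
    rw [map_mul, conj_expChar, sub_eq_add_neg, expChar_add]
    ring
  have hint : ∀ n m, IntegrableOn (fun ξ => c n * conj (c m) * expChar (n - m) ξ) (Icc 0 1) :=
    fun n m => Continuous.integrableOn_Icc (by fun_prop)
  apply Complex.ofReal_injective
  rw [← integral_complex_ofReal, tsum_eq_sum (s := s) fun n hn => by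
    rw [notMem_support.mp fun h => hn (hs h), norm_zero, zero_pow two_ne_zero]]
  push_cast
  simp_rw [hexpand]
  rw [integral_finsetSum _ fun n _ => integrable_finsetSum _ fun m _ => hint n m]
  refine Finset.sum_congr rfl fun n hn => ?_
  rw [integral_finsetSum _ fun m _ => hint n m]
  simp_rw [integral_const_mul, integral_expChar, sub_eq_zero, mul_ite, mul_one, mul_zero]
  rw [Finset.sum_ite_eq s n, if_pos hn, Complex.mul_conj']

section Correlation

variable {ι : Type*} [AddGroup ι]

/-- The paper's `f * \overline{g}`. -/
def corr (g f : ι → ℂ) (m : ι) : ℂ := ∑' q, f q * conj (g (q - m))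

lemma corr_eq_sum {g : ι → ℂ} {s : Finset ι} (hs : support g ⊆ s) (f : ι → ℂ) (m : ι) :
    corr g f m = ∑ n ∈ s, conj (g n) * f (n + m) := by
  rw [corr, ← (Equiv.addRight m).tsum_eq]
  simp only [Equiv.coe_addRight, add_sub_cancel_right]
  rw [tsum_eq_sum fun n hn => by rw [notMem_support.mp fun h => hn (hs h), map_zero, mul_zero]]
  exact Finset.sum_congr rfl fun n _ => mul_comm _ _

end Correlation

lemma support_corr_finite {ι : Type*} [AddCommGroup ι] {g f : ι → ℂ}
    (hf : (support f).Finite) (hg : (support g).Finite) : (support (corr g f)).Finite :=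
  (hf.sub hg).subset fun m hm => by
    obtain ⟨q, hq⟩ : ∃ q, f q * conj (g (q - m)) ≠ 0 := by
      by_contra! h
      exact hm (by simp [corr, h])
    exact ⟨q, left_ne_zero_of_mul hq, q - m, by simpa using right_ne_zero_of_mul hq,
      sub_sub_cancel q m⟩

lemma fourierSum_translate (f : ℤ × ℤ → ℂ) (n : ℤ × ℤ) (ξ : ℝ × ℝ) :
    fourierSum (fun m => f (n + m)) ξ = expChar (-n) ξ * fourierSum f ξ := by
  rw [fourierSum, fourierSum, ← tsum_mul_left]
  conv_rhs => rw [← (Equiv.addLeft n).tsum_eq]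
  refine tsum_congr fun m => ?_
  rw [Equiv.coe_addLeft, mul_left_comm, ← expChar_add, neg_add_cancel_left]

lemma fourierSum_corr {f g : ℤ × ℤ → ℂ} (hf : (support f).Finite) (hg : (support g).Finite)
    (ξ : ℝ × ℝ) : fourierSum (corr g f) ξ = fourierSum f ξ * conj (fourierSum g ξ) := by
  have hs : support g ⊆ hg.toFinset := hg.coe_toFinset.ge
  have hsummable : ∀ n, Summable fun m => f (n + m) * expChar m ξ := fun n =>
    summable_of_hasFiniteSupport <| (hf.preimage (add_right_injective n).injOn).subset
      (support_mul_subset_left _ _)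
  calc fourierSum (corr g f) ξ
      = ∑' m, ∑ n ∈ hg.toFinset, conj (g n) * (f (n + m) * expChar m ξ) := by
        simp_rw [fourierSum, corr_eq_sum hs, Finset.sum_mul, mul_assoc]
    _ = ∑ n ∈ hg.toFinset, conj (g n) * (expChar (-n) ξ * fourierSum f ξ) := by
        rw [Summable.tsum_finsetSum fun n _ => (hsummable n).mul_left _]
        simp_rw [tsum_mul_left, ← fourierSum_translate]
        rfl
    _ = fourierSum f ξ * conj (fourierSum g ξ) := by
        rw [fourierSum_eq_sum hs, map_sum, Finset.mul_sum]
        refine Finset.sum_congr rfl fun n _ => ?_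
        rw [map_mul, conj_expChar]
        ring

lemma tsum_norm_sq_corr {f g : ℤ × ℤ → ℂ} (hf : (support f).Finite) (hg : (support g).Finite) :
    ∑' m, ‖corr g f m‖ ^ 2 = ∫ ξ in Icc 0 1, ‖fourierSum f ξ‖ ^ 2 * ‖fourierSum g ξ‖ ^ 2 := by
  rw [← integral_norm_sq_fourierSum (support_corr_finite hf hg)]
  simp_rw [fourierSum_corr hf hg, norm_mul, Complex.norm_conj, mul_pow]

theorem frame_bounds_of_finite_support {κ : Type*} [Fintype κ] {g : κ → ℤ × ℤ → ℂ}
    (hg : ∀ i, (support (g i)).Finite) {A B : ℝ}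
    (hA : ∀ ξ, A ≤ ∑ i, ‖fourierSum (g i) ξ‖ ^ 2) (hB : ∀ ξ, ∑ i, ‖fourierSum (g i) ξ‖ ^ 2 ≤ B)
    {f : ℤ × ℤ → ℂ} (hf : (support f).Finite) :
    A * ∑' m, ‖f m‖ ^ 2 ≤ ∑ i, ∑' m, ‖corr (g i) f m‖ ^ 2 ∧
      ∑ i, ∑' m, ‖corr (g i) f m‖ ^ 2 ≤ B * ∑' m, ‖f m‖ ^ 2 := by
  have hf2 : Continuous fun ξ => ‖fourierSum f ξ‖ ^ 2 := (continuous_fourierSum hf).norm.pow 2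
  have hg2 : ∀ i, Continuous fun ξ => ‖fourierSum (g i) ξ‖ ^ 2 :=
    fun i => (continuous_fourierSum (hg i)).norm.pow 2
  have hQ : ∑ i, ∑' m, ‖corr (g i) f m‖ ^ 2 =
      ∫ ξ in Icc 0 1, ‖fourierSum f ξ‖ ^ 2 * ∑ i, ‖fourierSum (g i) ξ‖ ^ 2 := by
    simp_rw [tsum_norm_sq_corr hf (hg _), Finset.mul_sum]
    exact (integral_finsetSum _ fun i _ => (hf2.mul (hg2 i)).integrableOn_Icc).symm
  have hint : IntegrableOn (fun ξ => ‖fourierSum f ξ‖ ^ 2 * ∑ i, ‖fourierSum (g i) ξ‖ ^ 2)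
      (Icc 0 1) := (hf2.mul (continuous_finsetSum _ fun i _ => hg2 i)).integrableOn_Icc
  rw [hQ, ← integral_norm_sq_fourierSum hf, ← integral_const_mul, ← integral_const_mul]
  constructor
  · refine setIntegral_mono (continuous_const.mul hf2).integrableOn_Icc hint fun ξ => ?_
    rw [mul_comm]
    exact mul_le_mul_of_nonneg_left (hA ξ) (by positivity)
  · refine setIntegral_mono hint (continuous_const.mul hf2).integrableOn_Icc fun ξ => ?_
    rw [mul_comm B]
    exact mul_le_mul_of_nonneg_left (hB ξ) (by positivity)

section Shift

variable {ι : Type*} [AddGroup ι]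

lemma memℓp_shift (n : ι) (F : ℓ²(ι, ℂ)) : Memℓp (fun m => F (n + m)) 2 :=
  memℓp_gen <| (Equiv.addLeft n).summable_iff (f := fun m => ‖F m‖ ^ (2 : ℝ≥0∞).toReal) |>.mpr <|
    (lp.memℓp F).summable (by norm_num)

def shift (n : ι) : ℓ²(ι, ℂ) →ₗᵢ[ℂ] ℓ²(ι, ℂ) where
  toFun F := ⟨fun m => F (n + m), memℓp_shift n F⟩
  map_add' _ _ := rfl
  map_smul' _ _ := rfl
  norm_map' F := by
    rw [← sq_eq_sq₀ (norm_nonneg _) (norm_nonneg _), lp.norm_sq_eq_tsum, lp.norm_sq_eq_tsum]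
    exact (Equiv.addLeft n).tsum_eq fun m => ‖F m‖ ^ 2

lemma shift_apply (n : ι) (F : ℓ²(ι, ℂ)) (m : ι) : shift n F m = F (n + m) := rfl

def corrOp (s : Finset ι) (g : ι → ℂ) : ℓ²(ι, ℂ) →L[ℂ] ℓ²(ι, ℂ) :=
  ∑ n ∈ s, conj (g n) • (shift n).toContinuousLinearMap

lemma coe_corrOp {g : ι → ℂ} {s : Finset ι} (hs : support g ⊆ s) (F : ℓ²(ι, ℂ)) :
    ⇑(corrOp s g F) = corr g F := by
  funext m
  rw [corrOp, sum_apply, lp.coeFn_sum, Finset.sum_apply, corr_eq_sum hs]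
  simp only [smul_apply, LinearIsometry.coe_toContinuousLinearMap, lp.coeFn_smul, Pi.smul_apply,
    shift_apply, smul_eq_mul]

end Shift

theorem frame_bounds {κ : Type*} [Fintype κ] {g : κ → ℤ × ℤ → ℂ}
    (hg : ∀ i, (support (g i)).Finite) {A B : ℝ}
    (hA : ∀ ξ, A ≤ ∑ i, ‖fourierSum (g i) ξ‖ ^ 2) (hB : ∀ ξ, ∑ i, ‖fourierSum (g i) ξ‖ ^ 2 ≤ B)
    {f : ℤ × ℤ → ℂ} (hf : Memℓp f 2) :
    A * ∑' m, ‖f m‖ ^ 2 ≤ ∑ i, ∑' m, ‖corr (g i) f m‖ ^ 2 ∧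
      ∑ i, ∑' m, ‖corr (g i) f m‖ ^ 2 ≤ B * ∑' m, ‖f m‖ ^ 2 := by
  let T := fun i => corrOp (hg i).toFinset (g i)
  have hT : ∀ i F, ⇑(T i F) = corr (g i) F := fun i => coe_corrOp (hg i).coe_toFinset.ge
  suffices ∀ F : ℓ²(ℤ × ℤ, ℂ), A * ‖F‖ ^ 2 ≤ ∑ i, ‖T i F‖ ^ 2 ∧ ∑ i, ‖T i F‖ ^ 2 ≤ B * ‖F‖ ^ 2 by
    simpa only [lp.norm_sq_eq_tsum, hT] using this ⟨f, hf⟩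
  refine (lp.dense_setOf_finite_support (by norm_num)).induction (fun F hF => ?_) ?_
  · simpa only [lp.norm_sq_eq_tsum, hT] using frame_bounds_of_finite_support hg hA hB hF
  · simp only [ofPred_and]
    exact (isClosed_le (by fun_prop) (by fun_prop)).inter (isClosed_le (by fun_prop) (by fun_prop))

end FilterBank

end

open FilterBank in
/-- The translates of the filter system `{φᵈ} ∪ {ψᵈ_{j,k}}` form a frame for `ℓ²(ℤ²)` with
frame bounds `A = min_ξ Ψ̂ᵈ(ξ)` and `B = max_ξ Ψ̂ᵈ(ξ)`, where
`Ψ̂ᵈ(ξ) = |φ̂ᵈ(ξ)|² + ∑_{j,k} |ψ̂ᵈ_{j,k}(ξ)|²`. -/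
theorem filter_system_frame_bounds
    {κ : Type*} [Fintype κ]
    (φd : ℤ × ℤ → ℂ) (ψd : κ → ℤ × ℤ → ℂ)
    (hφfin : (Function.support φd).Finite)
    (hψfin : ∀ i, (Function.support (ψd i)).Finite)
    (Fφ : ℝ × ℝ → ℂ) (Fψ : κ → ℝ × ℝ → ℂ)
    (hFφ : ∀ ξ : ℝ × ℝ, Fφ ξ = ∑' n : ℤ × ℤ,
      φd n * Complex.exp (-2 * (π : ℂ) * Complex.I *
        ((n.1 : ℂ) * (ξ.1 : ℂ) + (n.2 : ℂ) * (ξ.2 : ℂ))))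
    (hFψ : ∀ (i : κ) (ξ : ℝ × ℝ), Fψ i ξ = ∑' n : ℤ × ℤ,
      ψd i n * Complex.exp (-2 * (π : ℂ) * Complex.I *
        ((n.1 : ℂ) * (ξ.1 : ℂ) + (n.2 : ℂ) * (ξ.2 : ℂ))))
    (A B : ℝ)
    (hA : IsLeast {y : ℝ | ∃ ξ : ℝ × ℝ, y = ‖Fφ ξ‖ ^ 2 + ∑ i : κ, ‖Fψ i ξ‖ ^ 2} A)
    (hB : IsGreatest {y : ℝ | ∃ ξ : ℝ × ℝ, y = ‖Fφ ξ‖ ^ 2 + ∑ i : κ, ‖Fψ i ξ‖ ^ 2} B) :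
    ∀ f : ℤ × ℤ → ℂ, Memℓp f 2 →
      A * ∑' m : ℤ × ℤ, ‖f m‖ ^ 2 ≤
        (∑' m : ℤ × ℤ, ‖∑' q : ℤ × ℤ, f q * (starRingEnd ℂ) (φd (q - m))‖ ^ 2) +
          ∑ i : κ, ∑' m : ℤ × ℤ, ‖∑' q : ℤ × ℤ, f q * (starRingEnd ℂ) (ψd i (q - m))‖ ^ 2 ∧
      (∑' m : ℤ × ℤ, ‖∑' q : ℤ × ℤ, f q * (starRingEnd ℂ) (φd (q - m))‖ ^ 2) +
          ∑ i : κ, ∑' m : ℤ × ℤ, ‖∑' q : ℤ × ℤ, f q * (starRingEnd ℂ) (ψd i (q - m))‖ ^ 2 ≤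
        B * ∑' m : ℤ × ℤ, ‖f m‖ ^ 2 := by
  intro f hf
  let g : Option κ → ℤ × ℤ → ℂ := fun o => o.elim φd ψd
  have hg : ∀ o, (Function.support (g o)).Finite := fun o => o.rec hφfin hψfin
  have hsymbol : ∀ ξ, ∑ o, ‖fourierSum (g o) ξ‖ ^ 2 ∈
      {y : ℝ | ∃ ξ : ℝ × ℝ, y = ‖Fφ ξ‖ ^ 2 + ∑ i : κ, ‖Fψ i ξ‖ ^ 2} := fun ξ =>
    ⟨ξ, by simp_rw [Fintype.sum_option, hFφ, hFψ]; rfl⟩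
  have := frame_bounds hg (fun ξ => hA.2 (hsymbol ξ)) (fun ξ => hB.2 (hsymbol ξ)) hf
  rw [Fintype.sum_option] at this
  exact this
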